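/- arXiv:1904.10679 — 2 statements merged into one kernel-verified Lean document; each statement's English description precedes it below -/
import Mathlib

section
/- Let M ≥ 2, T₁ = (1/(N·M)) ∑_{m=1}^M y_{a_m}²/π_{a_m}, and T₂ = (1/(M(M−1))) ∑_{m=1}^M [ y_{a_m}/(N·π_{a_m}) − (1/(N·M)) ∑_{k=1}^M y_{a_k}/π_{a_k} ]² − [ (1/(N·M)) ∑_{k=1}^M y_{a_k}/π_{a_k} ]². Then T₁ + T₂ is an unbiased estimator of the population variance: E[T₁ + T₂] = (1/N) ∑_{j=1}^N y_j² − (τ/N)² = (1/N) ∑_{j=1}^N (y_j − ȳ)². -/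
open Finset

section helpers
variable {N M : ℕ} (π : Fin N → ℝ) (hπsum : ∑ j, π j = 1)

lemma exp_prod (g : Fin M → Fin N → ℝ) :
    ∑ a : Fin M → Fin N, ∏ m, g m (a m) = ∏ m, ∑ j, g m j :=
  (Fintype.prod_sum g).symm

include hπsum in
lemma exp_single (g : Fin N → ℝ) (m : Fin M) :
    ∑ a : Fin M → Fin N, (∏ k, π (a k)) * g (a m) = ∑ j, π j * g j := by
  classical
  have h : ∀ a : Fin M → Fin N,
      (∏ k, π (a k)) * g (a m) =
      ∏ k, (if k = m then π (a k) * g (a k) else π (a k)) := by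
    intro a
    have e1 : ∀ x ∈ univ.erase m,
        (if x = m then π (a x) * g (a x) else π (a x)) = π (a x) :=
      fun x hx => if_neg (Finset.ne_of_mem_erase hx)
    rw [← Finset.mul_prod_erase univ
        (fun k => if k = m then π (a k) * g (a k) else π (a k)) (mem_univ m),
      Finset.prod_congr rfl e1, if_pos rfl,
      ← Finset.mul_prod_erase univ (fun k => π (a k)) (mem_univ m)]
    ring
  rw [Finset.sum_congr rfl (fun a _ => h a)]
  have main := exp_prod (M := M) (fun i j => if i = m then π j * g j else π j)
  rw [main, Finset.prod_eq_single m (fun k _ hk => by simp [if_neg hk, hπsum]) (by simp)]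
  simp

include hπsum in
lemma exp_pair (g g' : Fin N → ℝ) (m k : Fin M) (hmk : m ≠ k) :
    ∑ a : Fin M → Fin N, (∏ i, π (a i)) * (g (a m) * g' (a k)) =
      (∑ j, π j * g j) * (∑ j, π j * g' j) := by
  classical
  have h1 : ∀ a : Fin M → Fin N,
      (∏ i, π (a i)) * (g (a m) * g' (a k)) =
      ∏ i, (π (a i) * (if i = m then g (a i) else 1) * (if i = k then g' (a i) else 1)) := by
    intro a
    rw [Finset.prod_mul_distrib, Finset.prod_mul_distrib]
    simp [Finset.prod_ite_eq' univ m (fun i => g (a i)),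
      Finset.prod_ite_eq' univ k (fun i => g' (a i))]
    ring
  rw [Finset.sum_congr rfl (fun a _ => h1 a)]
  have main := exp_prod (M := M)
    (fun i j => π j * (if i = m then g j else 1) * (if i = k then g' j else 1))
  rw [main]
  have h2 : ∀ i : Fin M,
      (∑ j, π j * (if i = m then g j else 1) * (if i = k then g' j else 1)) =
      (if i = m then ∑ j, π j * g j else 1) * (if i = k then ∑ j, π j * g' j else 1) := by
    intro i
    rcases eq_or_ne i m with rfl | him
    · simp [if_neg hmk, if_neg (Ne.symm hmk)]
    · rcases eq_or_ne i k with rfl | hik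
      · simp [if_neg him]
      · simp [if_neg him, if_neg hik, hπsum]
  rw [Finset.prod_congr rfl (fun i _ => h2 i), Finset.prod_mul_distrib]
  simp [Finset.prod_ite_eq' univ m, Finset.prod_ite_eq' univ k]

end helpers

/-- With `T₁ = (1/(N·M)) ∑ₘ y_{aₘ}²/π_{aₘ}` and
`T₂ = (1/(M(M−1))) ∑ₘ [ y_{aₘ}/(N·π_{aₘ}) − (1/(N·M)) ∑ₖ y_{aₖ}/π_{aₖ} ]²
  − [ (1/(N·M)) ∑ₖ y_{aₖ}/π_{aₖ} ]²`, for `M ≥ 2` the sum `T₁ + T₂` is an unbiased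
estimator of the population variance:
`E[T₁ + T₂] = (1/N) ∑ⱼ yⱼ² − (τ/N)² = (1/N) ∑ⱼ (yⱼ − ȳ)²`, with `τ = ∑ⱼ yⱼ`,
`ȳ = τ/N`, expectation over the `M`-fold product of the pmf `π`. -/
theorem T1_add_T2_unbiased_variance (N M : ℕ) (hN : 0 < N) (hM : 2 ≤ M)
    (y : Fin N → ℝ) (π : Fin N → ℝ)
    (hπpos : ∀ j, 0 < π j) (hπsum : ∑ j, π j = 1) :
    (∑ a : Fin M → Fin N, (∏ m, π (a m)) *
        ((1 / ((N : ℝ) * (M : ℝ))) * (∑ m, y (a m) ^ 2 / π (a m)) +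
          ((1 / ((M : ℝ) * ((M : ℝ) - 1))) *
              ∑ m, (y (a m) / ((N : ℝ) * π (a m)) -
                (1 / ((N : ℝ) * (M : ℝ))) * ∑ k, y (a k) / π (a k)) ^ 2 -
            ((1 / ((N : ℝ) * (M : ℝ))) * ∑ k, y (a k) / π (a k)) ^ 2)) =
      (1 / (N : ℝ)) * (∑ j, y j ^ 2) - ((∑ j, y j) / (N : ℝ)) ^ 2) ∧
    (1 / (N : ℝ)) * (∑ j, y j ^ 2) - ((∑ j, y j) / (N : ℝ)) ^ 2 =
      (1 / (N : ℝ)) * ∑ j, (y j - (∑ i, y i) / (N : ℝ)) ^ 2 := by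
  classical
  have hNR : ((N : ℝ)) ≠ 0 := Nat.cast_ne_zero.mpr hN.ne'
  have hMR : ((M : ℝ)) ≠ 0 := Nat.cast_ne_zero.mpr (by omega)
  have hM1 : ((M : ℝ)) - 1 ≠ 0 := by
    have : (2 : ℝ) ≤ (M : ℝ) := by exact_mod_cast hM
    linarith
  constructor
  · -- main computation
    set f : Fin N → ℝ := fun j => y j / π j with hf
    set p : Fin N → ℝ := fun j => y j ^ 2 / π j with hp
    set A : ℝ := 1 / ((N : ℝ) * (M : ℝ)) with hA
    set B : ℝ := 1 / ((N : ℝ)^2 * (M : ℝ) * ((M : ℝ) - 1)) with hB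
    -- pointwise rewrite of the estimator
    have key : ∀ a : Fin M → Fin N,
        (1 / ((N : ℝ) * (M : ℝ))) * (∑ m, y (a m) ^ 2 / π (a m)) +
          ((1 / ((M : ℝ) * ((M : ℝ) - 1))) *
              ∑ m, (y (a m) / ((N : ℝ) * π (a m)) -
                (1 / ((N : ℝ) * (M : ℝ))) * ∑ k, y (a k) / π (a k)) ^ 2 -
            ((1 / ((N : ℝ) * (M : ℝ))) * ∑ k, y (a k) / π (a k)) ^ 2) =
        A * (∑ m, p (a m)) + B * ((∑ m, (f (a m))^2) - (∑ m, f (a m))^2) := by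
      intro a
      have hterm : ∀ m : Fin M, y (a m) / ((N : ℝ) * π (a m)) = f (a m) / (N : ℝ) := by
        intro m
        simp only [hf]
        rw [div_div, mul_comm]
      have hterm2 : ∀ k : Fin M, y (a k) / π (a k) = f (a k) := fun k => rfl
      have hterm3 : ∀ m : Fin M, y (a m) ^ 2 / π (a m) = p (a m) := fun m => rfl
      simp only [hterm, hterm2, hterm3]
      set S : ℝ := ∑ m, f (a m) with hS
      set W : ℝ := ∑ m, (f (a m))^2 with hW
      -- expand the square sum
      have hsq : ∑ m : Fin M, (f (a m) / (N : ℝ) - (1 / ((N : ℝ) * (M : ℝ))) * S) ^ 2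
          = W / (N : ℝ)^2 - S^2 / ((N : ℝ)^2 * (M : ℝ)) := by
        have hpt : ∀ m : Fin M, (f (a m) / (N : ℝ) - (1 / ((N : ℝ) * (M : ℝ))) * S) ^ 2
            = (f (a m))^2 / (N : ℝ)^2
              - 2 * f (a m) * S / ((N : ℝ)^2 * (M : ℝ))
              + S^2 / ((N : ℝ)^2 * (M : ℝ)^2) := by
          intro m
          field_simp
          ring
        rw [Finset.sum_congr rfl (fun m _ => hpt m)]
        rw [Finset.sum_add_distrib, Finset.sum_sub_distrib]
        rw [Finset.sum_const, Finset.card_univ, Fintype.card_fin, nsmul_eq_mul]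
        have e1 : ∑ m : Fin M, (f (a m))^2 / (N:ℝ)^2 = W / (N:ℝ)^2 := by
          rw [hW, Finset.sum_div]
        have e2 : ∑ m : Fin M, 2 * f (a m) * S / ((N:ℝ)^2 * (M:ℝ))
            = 2 * S * S / ((N:ℝ)^2 * (M:ℝ)) := by
          rw [← Finset.sum_div, ← Finset.sum_mul, ← Finset.mul_sum, ← hS]
        rw [e1, e2]
        field_simp
        ring
      rw [hsq]
      rw [hA, hB]
      field_simp
      ring
    rw [Finset.sum_congr rfl (fun a _ => by rw [key a])]
    -- linearity
    have hsplit : ∑ a : Fin M → Fin N, (∏ m, π (a m)) *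
        (A * (∑ m, p (a m)) + B * ((∑ m, (f (a m))^2) - (∑ m, f (a m))^2)) =
        A * (∑ a : Fin M → Fin N, (∏ m, π (a m)) * (∑ m, p (a m)))
        + B * (∑ a : Fin M → Fin N, (∏ m, π (a m)) * (∑ m, (f (a m))^2))
        - B * (∑ a : Fin M → Fin N, (∏ m, π (a m)) * (∑ m, f (a m))^2) := by
      rw [Finset.mul_sum, Finset.mul_sum, Finset.mul_sum, ← Finset.sum_add_distrib,
        ← Finset.sum_sub_distrib]
      exact Finset.sum_congr rfl (fun a _ => by ring)
    rw [hsplit]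
    -- E[∑ p(a m)]
    have hEp : ∑ a : Fin M → Fin N, (∏ m, π (a m)) * (∑ m, p (a m))
        = (M : ℝ) * ∑ j, π j * p j := by
      have h0 : ∀ a : Fin M → Fin N, (∏ m, π (a m)) * (∑ m, p (a m))
          = ∑ m, (∏ k, π (a k)) * p (a m) := fun a => Finset.mul_sum _ _ _
      rw [Finset.sum_congr rfl (fun a _ => h0 a), Finset.sum_comm]
      rw [Finset.sum_congr rfl (fun m _ => exp_single π hπsum p m)]
      rw [Finset.sum_const, Finset.card_univ, Fintype.card_fin, nsmul_eq_mul]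
    have hEf2 : ∑ a : Fin M → Fin N, (∏ m, π (a m)) * (∑ m, (f (a m))^2)
        = (M : ℝ) * ∑ j, π j * (f j)^2 := by
      have h0 : ∀ a : Fin M → Fin N, (∏ m, π (a m)) * (∑ m, (f (a m))^2)
          = ∑ m, (∏ k, π (a k)) * (fun j => (f j)^2) (a m) := fun a => Finset.mul_sum _ _ _
      rw [Finset.sum_congr rfl (fun a _ => h0 a), Finset.sum_comm]
      rw [Finset.sum_congr rfl (fun m _ => exp_single π hπsum (fun j => (f j)^2) m)]
      rw [Finset.sum_const, Finset.card_univ, Fintype.card_fin, nsmul_eq_mul]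
    -- E[S^2]
    have hES2 : ∑ a : Fin M → Fin N, (∏ m, π (a m)) * (∑ m, f (a m))^2
        = (M : ℝ) * ∑ j, π j * (f j)^2
          + (M : ℝ) * ((M : ℝ) - 1) * (∑ j, π j * f j)^2 := by
      have hexp : ∀ a : Fin M → Fin N, (∏ m, π (a m)) * (∑ m, f (a m))^2
          = ∑ m, ∑ k, (∏ i, π (a i)) * (f (a m) * f (a k)) := by
        intro a
        rw [sq, Finset.sum_mul_sum, Finset.mul_sum]
        exact Finset.sum_congr rfl fun m _ => by
          rw [Finset.mul_sum]
      rw [Finset.sum_congr rfl (fun a _ => hexp a), Finset.sum_comm]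
      have hswap : ∀ m : Fin M,
          ∑ a : Fin M → Fin N, ∑ k, (∏ i, π (a i)) * (f (a m) * f (a k))
          = ∑ k, ∑ a : Fin M → Fin N, (∏ i, π (a i)) * (f (a m) * f (a k)) :=
        fun m => Finset.sum_comm
      rw [Finset.sum_congr rfl (fun m _ => hswap m)]
      have hval : ∀ m k : Fin M,
          ∑ a : Fin M → Fin N, (∏ i, π (a i)) * (f (a m) * f (a k))
          = if m = k then ∑ j, π j * (f j)^2 else (∑ j, π j * f j)^2 := by
        intro m k
        rcases eq_or_ne m k with rfl | hmk
        · rw [if_pos rfl]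
          have h0 : ∀ a : Fin M → Fin N, (∏ i, π (a i)) * (f (a m) * f (a m))
              = (∏ i, π (a i)) * (fun j => (f j)^2) (a m) := fun a => by simp [sq]
          rw [Finset.sum_congr rfl (fun a _ => h0 a)]
          exact exp_single π hπsum (fun j => (f j)^2) m
        · rw [if_neg hmk, exp_pair π hπsum f f m k hmk, sq]
      rw [Finset.sum_congr rfl (fun m _ => Finset.sum_congr rfl (fun k _ => hval m k))]
      set Q : ℝ := ∑ j, π j * (f j)^2 with hQ
      set T : ℝ := (∑ j, π j * f j)^2 with hT
      have inner : ∀ m : Fin M, ∑ k : Fin M, (if m = k then Q else T)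
          = (M : ℝ) * T + (Q - T) := by
        intro m
        have hpt : ∀ k : Fin M, (if m = k then Q else T)
            = T + (if m = k then Q - T else 0) := by
          intro k; split_ifs <;> ring
        rw [Finset.sum_congr rfl (fun k _ => hpt k), Finset.sum_add_distrib,
          Finset.sum_const, Finset.card_univ, Fintype.card_fin, nsmul_eq_mul,
          Finset.sum_ite_eq univ m (fun _ => Q - T), if_pos (mem_univ m)]
      rw [Finset.sum_congr rfl (fun m _ => inner m), Finset.sum_const,
        Finset.card_univ, Fintype.card_fin, nsmul_eq_mul]
      ring
    rw [hEp, hEf2, hES2]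
    have h1 : ∑ j, π j * p j = ∑ j, y j ^ 2 :=
      Finset.sum_congr rfl fun j _ => by
        have := (hπpos j).ne'
        simp only [hp]
        field_simp
    have h2 : ∑ j, π j * f j = ∑ j, y j :=
      Finset.sum_congr rfl fun j _ => by
        have := (hπpos j).ne'
        simp only [hf]
        field_simp
    rw [h1, h2]
    rw [hA, hB]
    set Q2 : ℝ := ∑ j, π j * (f j)^2 with hQ2
    field_simp
    ring
  · -- second conjunct
    have expand : ∀ j : Fin N, (y j - (∑ i, y i) / (N : ℝ)) ^ 2
        = y j ^ 2 - 2 * y j * ((∑ i, y i) / (N : ℝ)) + ((∑ i, y i) / (N : ℝ))^2 := by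
      intro j; ring
    rw [Finset.sum_congr rfl (fun j _ => expand j), Finset.sum_add_distrib,
      Finset.sum_sub_distrib, Finset.sum_const, Finset.card_univ, Fintype.card_fin,
      nsmul_eq_mul]
    have h3 : ∑ j, 2 * y j * ((∑ i, y i) / (N : ℝ))
        = 2 * (∑ i, y i) * ((∑ i, y i) / (N : ℝ)) := by
      rw [← Finset.sum_mul, ← Finset.mul_sum]
    rw [h3]
    field_simp
    ring
end

section
/- Let (Θ, 𝔐, μ) be a probability space, p₀ > 0, and f, g : Θ → ℝ be integrable functions with f(θ) > 0 and g(θ) ≥ 0 for all θ, such that p₀ ≤ f(θ)·(1 + g(θ)) for all θ and ∫ f dμ > 0. Then log(p₀/(∫ f dμ)) ≤ ∫ g dμ. -/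
open MeasureTheory

/-- Let `(Θ, μ)` be a probability space, `p₀ > 0`, and `f, g : Θ → ℝ` integrable with
`f θ > 0`, `g θ ≥ 0`, `p₀ ≤ f θ·(1 + g θ)` pointwise, and `∫ f dμ > 0`. Then
`log(p₀/(∫ f dμ)) ≤ ∫ g dμ`. -/
theorem log_reverse_integral_bound {Θ : Type*} [MeasurableSpace Θ]
    (μ : Measure Θ) [IsProbabilityMeasure μ]
    (p₀ : ℝ) (hp₀ : 0 < p₀) (f g : Θ → ℝ)
    (hf : Integrable f μ) (hg : Integrable g μ)
    (hfpos : ∀ θ, 0 < f θ) (hgnonneg : ∀ θ, 0 ≤ g θ)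
    (hbound : ∀ θ, p₀ ≤ f θ * (1 + g θ))
    (hfint : 0 < ∫ θ, f θ ∂μ) :
    Real.log (p₀ / ∫ θ, f θ ∂μ) ≤ ∫ θ, g θ ∂μ := by
  set F := ∫ θ, f θ ∂μ with hF
  have key : ∀ θ, Real.log p₀ ≤ Real.log F + (f θ / F - 1) + g θ := by
    intro θ
    have h1 : Real.log p₀ ≤ Real.log (f θ) + g θ := by
      have hgp : (0:ℝ) < 1 + g θ := by linarith [hgnonneg θ]
      calc Real.log p₀ ≤ Real.log (f θ * (1 + g θ)) :=
            Real.log_le_log hp₀ (hbound θ)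
        _ = Real.log (f θ) + Real.log (1 + g θ) :=
            Real.log_mul (hfpos θ).ne' hgp.ne'
        _ ≤ Real.log (f θ) + g θ := by
            have := Real.log_le_sub_one_of_pos hgp
            linarith
    have h2 : Real.log (f θ) ≤ Real.log F + (f θ / F - 1) := by
      have hdiv : (0:ℝ) < f θ / F := div_pos (hfpos θ) hfint
      have := Real.log_le_sub_one_of_pos hdiv
      rw [Real.log_div (hfpos θ).ne' hfint.ne'] at this
      linarith
    linarith
  have hsub : Integrable (fun θ => f θ / F - 1) μ := (hf.div_const F).sub (integrable_const 1)
  have h1int : Integrable (fun θ => Real.log F + (f θ / F - 1)) μ :=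
    (integrable_const _).add hsub
  have hint : Integrable (fun θ => Real.log F + (f θ / F - 1) + g θ) μ := h1int.add hg
  have hle : ∫ θ, (Real.log p₀ : ℝ) ∂μ ≤ ∫ θ, (Real.log F + (f θ / F - 1) + g θ) ∂μ :=
    integral_mono (integrable_const _) hint key
  rw [integral_const, probReal_univ, one_smul] at hle
  have hr : ∫ θ, (Real.log F + (f θ / F - 1) + g θ) ∂μ
      = Real.log F + (F / F - 1) + ∫ θ, g θ ∂μ := by
    rw [integral_add h1int hg, integral_add (integrable_const _) hsub,
      integral_const, probReal_univ, one_smul,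
      integral_sub (hf.div_const F) (integrable_const 1),
      integral_div, integral_const, probReal_univ, one_smul]
  rw [hr, div_self hfint.ne'] at hle
  rw [Real.log_div hp₀.ne' hfint.ne']
  linarith
end
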